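/- Let A and B be affine subspaces of ℝ^n with A ∩ B ≠ ∅, and let T_DR = ½(R_A R_B + Id) be the Douglas–Rachford operator, where R_A and R_B are the (single-valued) reflections across A and B. Then for every starting point x⁰ ∈ ℝ^n the iterates x^{k+1} = T_DR x^k converge to some fixed point x̄ of T_DR at a linear rate: there exist c ∈ [0,1) and C > 0 with ‖x^k − x̄‖ ≤ C c^k for all k. Moreover P_B x̄ ∈ A ∩ B. -/

import Mathlib

/-!
After translating a point `z ∈ A ∩ B` to the origin, the projections become the orthogonal
projections onto the directions of `A` and `B`, and the Douglas–Rachford operator becomes the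
averaged isometry `S = ½(Q + 1)` with `Q = R_A R_B` linear. `S` fixes `Fix Q` and maps
`(Fix Q)ᗮ` into itself, where it is a strict contraction by strict convexity of the norm;
in finite dimension compactness of the unit sphere upgrades this to `‖S v‖ ≤ c ‖v‖`, `c < 1`.
Splitting `x⁰ - z` along `Fix Q ⊕ (Fix Q)ᗮ` gives the limit `x̄` and the linear rate.
-/

theorem ContinuousLinearMap.opNorm_lt_one_of_norm_apply_lt {E F : Type*}
    [NormedAddCommGroup E] [NormedSpace ℝ E] [FiniteDimensional ℝ E]
    [SeminormedAddCommGroup F] [NormedSpace ℝ F]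
    (f : E →L[ℝ] F) (hf : ∀ v ≠ 0, ‖f v‖ < ‖v‖) : ‖f‖ < 1 := by
  rcases subsingleton_or_nontrivial E with hE | hE
  · simp [opNorm_subsingleton]
  have hsphere : IsCompact ((fun v => ‖f v‖) '' Metric.sphere 0 1) :=
    (isCompact_sphere 0 1).image (by fun_prop)
  obtain ⟨v, hv, hfv⟩ :=
    hsphere.sSup_mem ((NormedSpace.sphere_nonempty.mpr zero_le_one).image _)
  rw [f.sSup_sphere_eq_norm] at hfv
  rw [mem_sphere_zero_iff_norm] at hv
  rw [← hfv, ← hv]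
  exact hf v (norm_ne_zero_iff.mp (hv ▸ one_ne_zero))

theorem norm_iterate_le_of_mapsTo {E : Type*} [SeminormedAddCommGroup E] {f : E → E}
    {s : Set E} {c : ℝ} (hs : Set.MapsTo f s s) (hc : 0 ≤ c)
    (hf : ∀ v ∈ s, ‖f v‖ ≤ c * ‖v‖) :
    ∀ v ∈ s, ∀ k, ‖f^[k] v‖ ≤ c ^ k * ‖v‖ := by
  intro v hv k
  induction k generalizing v with
  | zero => simp
  | succ k ih =>
    calc ‖f^[k] (f v)‖ ≤ c ^ k * ‖f v‖ := ih (f v) (hs hv)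
      _ ≤ c ^ k * (c * ‖v‖) := by gcongr; exact hf v hv
      _ = c ^ (k + 1) * ‖v‖ := by ring

theorem sub_eq_iterate_of_eq_vadd {E F : Type*} [AddCommGroup E] [FunLike F E E]
    [AddMonoidHomClass F E E] {S : F} {T : E → E} {x : ℕ → E} {z w : E}
    (hT : ∀ y, T y = z + S (y - z)) (hw : S w = w) (hx : ∀ k, x (k + 1) = T (x k)) (k : ℕ) :
    x k - (z + w) = S^[k] (x 0 - (z + w)) := by
  induction k with
  | zero => rfl
  | succ k ih =>
    rw [Function.iterate_succ_apply', ← ih, hx, hT]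
    conv_lhs => rw [← hw]
    rw [add_sub_add_left_eq_sub, ← map_sub, sub_sub]

section NearestPoint

variable {E : Type*} [NormedAddCommGroup E] [InnerProductSpace ℝ E]

theorem Submodule.starProjection_eq_of_forall_norm_sub_le (K : Submodule ℝ E)
    [K.HasOrthogonalProjection] {u v : E} (hv : v ∈ K)
    (hmin : ∀ w ∈ K, ‖u - v‖ ≤ ‖u - w‖) :
    K.starProjection u = v := by
  refine K.eq_starProjection_of_mem_of_inner_eq_zero hv ?_
  rw [← norm_eq_iInf_iff_real_inner_eq_zero K hv]
  exact le_antisymm (le_ciInf fun w => hmin w w.2)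
    (ciInf_le ⟨0, by rintro _ ⟨w, rfl⟩; positivity⟩ (⟨v, hv⟩ : K))

theorem AffineSubspace.eq_vadd_starProjection_of_forall_norm_sub_le
    (s : AffineSubspace ℝ E) [s.direction.HasOrthogonalProjection] {z x p : E}
    (hz : z ∈ s) (hp : p ∈ s) (hmin : ∀ y ∈ s, ‖x - p‖ ≤ ‖x - y‖) :
    p = z + s.direction.starProjection (x - z) := by
  rw [s.direction.starProjection_eq_of_forall_norm_sub_le (s.vsub_mem_direction hp hz)]
  · rw [vsub_eq_sub, add_sub_cancel]
  intro w hw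
  simpa [sub_sub_sub_cancel_right, sub_sub, add_comm] using
    hmin (w + z) (s.vadd_mem_of_mem_direction hw hz)

end NearestPoint

namespace LinearIsometry

variable {E : Type*} [NormedAddCommGroup E] [InnerProductSpace ℝ E] (Q : E →ₗᵢ[ℝ] E)

def fixedSubspace : Submodule ℝ E := LinearMap.eqLocus Q.toLinearMap LinearMap.id

theorem mem_fixedSubspace {v : E} : v ∈ Q.fixedSubspace ↔ Q v = v := Iff.rfl

noncomputable def averaged : E →L[ℝ] E :=
  (2 : ℝ)⁻¹ • (Q.toContinuousLinearMap + ContinuousLinearMap.id ℝ E)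

@[simp]
theorem averaged_apply (v : E) : Q.averaged v = (2 : ℝ)⁻¹ • (Q v + v) := rfl

variable {Q}

theorem averaged_eq_self {v : E} (hv : v ∈ Q.fixedSubspace) : Q.averaged v = v := by
  rw [averaged_apply, Q.mem_fixedSubspace.mp hv, ← two_smul ℝ, smul_smul]
  norm_num

theorem map_mem_orthogonal_fixedSubspace {v : E} (hv : v ∈ Q.fixedSubspaceᗮ) :
    Q v ∈ Q.fixedSubspaceᗮ := by
  intro w hw
  rw [← Q.mem_fixedSubspace.mp hw, Q.inner_map_map]
  exact hv w hw

theorem averaged_mem_orthogonal_fixedSubspace {v : E} (hv : v ∈ Q.fixedSubspaceᗮ) :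
    Q.averaged v ∈ Q.fixedSubspaceᗮ :=
  Submodule.smul_mem _ _ (Submodule.add_mem _ (map_mem_orthogonal_fixedSubspace hv) hv)

theorem norm_averaged_lt {v : E} (hv : v ∈ Q.fixedSubspaceᗮ) (hv₀ : v ≠ 0) :
    ‖Q.averaged v‖ < ‖v‖ := by
  have hQv : Q v ≠ v := fun h =>
    hv₀ (Submodule.inf_orthogonal_eq_bot _ |>.le ⟨Q.mem_fixedSubspace.mpr h, hv⟩)
  have hlt : ‖Q v + v‖ < ‖Q v‖ + ‖v‖ :=
    norm_add_lt_of_not_sameRay fun h => hQv (h.eq_of_norm_eq (Q.norm_map v))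
  rw [averaged_apply, norm_smul, Q.norm_map] at *
  norm_num
  linarith

theorem exists_norm_iterate_averaged_le [FiniteDimensional ℝ E] (Q : E →ₗᵢ[ℝ] E) :
    ∃ c, 0 ≤ c ∧ c < 1 ∧
      ∀ v ∈ Q.fixedSubspaceᗮ, ∀ k, ‖Q.averaged^[k] v‖ ≤ c ^ k * ‖v‖ := by
  set f := Q.averaged ∘L Q.fixedSubspaceᗮ.subtypeL
  have hf : ‖f‖ < 1 := f.opNorm_lt_one_of_norm_apply_lt fun v hv =>
    norm_averaged_lt v.2 (by simpa using hv)
  refine ⟨‖f‖, norm_nonneg f, hf, norm_iterate_le_of_mapsTo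
    (fun v hv => averaged_mem_orthogonal_fixedSubspace hv) (norm_nonneg f) fun v hv => ?_⟩
  exact f.le_opNorm ⟨v, hv⟩

end LinearIsometry

noncomputable def douglasRachford {E : Type*} [AddCommGroup E] [Module ℝ E]
    (pA pB : E → E) (x : E) : E :=
  (1/2 : ℝ) • ((((2:ℝ) • pA ((2:ℝ) • pB x - x) - ((2:ℝ) • pB x - x))) + x)

theorem apply_eq_of_douglasRachford_eq_self {E : Type*} [AddCommGroup E] [Module ℝ E]
    {pA pB : E → E} {x : E} (hx : douglasRachford pA pB x = x) :
    pA ((2:ℝ) • pB x - x) = pB x := by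
  unfold douglasRachford at hx
  linear_combination (norm := module) hx

theorem douglasRachford_eq_vadd_averaged {E : Type*} [NormedAddCommGroup E]
    [InnerProductSpace ℝ E] {pA pB : E → E} {K L : Submodule ℝ E}
    [K.HasOrthogonalProjection] [L.HasOrthogonalProjection] {z : E}
    (hpA : ∀ y, pA y = z + K.starProjection (y - z))
    (hpB : ∀ y, pB y = z + L.starProjection (y - z)) (y : E) :
    douglasRachford pA pB y =
      z + (L.reflection.trans K.reflection).toLinearIsometry.averaged (y - z) := by
  simp only [douglasRachford, hpA, hpB, LinearIsometry.averaged_apply,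
    LinearIsometryEquiv.coe_toLinearIsometry, LinearIsometryEquiv.trans_apply,
    Submodule.reflection_apply, map_sub, map_smul, map_nsmul, map_add]
  module

theorem stmt18 {n : ℕ} (A B : AffineSubspace ℝ (EuclideanSpace ℝ (Fin n)))
    (hAB : ((A : Set (EuclideanSpace ℝ (Fin n))) ∩ B).Nonempty)
    (pA pB : EuclideanSpace ℝ (Fin n) → EuclideanSpace ℝ (Fin n))
    (hpA : ∀ x, pA x ∈ A ∧ ∀ y ∈ A, ‖x - pA x‖ ≤ ‖x - y‖)
    (hpB : ∀ x, pB x ∈ B ∧ ∀ y ∈ B, ‖x - pB x‖ ≤ ‖x - y‖)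
    (T : EuclideanSpace ℝ (Fin n) → EuclideanSpace ℝ (Fin n))
    (hT : ∀ x, T x = (1/2 : ℝ) •
      ((((2:ℝ) • pA ((2:ℝ) • pB x - x) - ((2:ℝ) • pB x - x))) + x))
    (x : ℕ → EuclideanSpace ℝ (Fin n)) (hx : ∀ k, x (k + 1) = T (x k)) :
    ∃ xbar, T xbar = xbar ∧
      (∃ c, 0 ≤ c ∧ c < 1 ∧ ∃ C > (0:ℝ), ∀ k, ‖x k - xbar‖ ≤ C * c ^ k) ∧
      pB xbar ∈ (A : Set (EuclideanSpace ℝ (Fin n))) ∩ B := by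
  obtain rfl : T = douglasRachford pA pB := funext hT
  obtain ⟨z, hzA, hzB⟩ := hAB
  set Q := (B.direction.reflection.trans A.direction.reflection).toLinearIsometry
  have hT' : ∀ y, douglasRachford pA pB y = z + Q.averaged (y - z) :=
    douglasRachford_eq_vadd_averaged
      (fun y => A.eq_vadd_starProjection_of_forall_norm_sub_le hzA (hpA y).1 (hpA y).2)
      (fun y => B.eq_vadd_starProjection_of_forall_norm_sub_le hzB (hpB y).1 (hpB y).2)
  obtain ⟨c, hc₀, hc₁, hcontract⟩ := Q.exists_norm_iterate_averaged_le
  set w := Q.fixedSubspace.starProjection (x 0 - z)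
  have hw : Q.averaged w = w :=
    LinearIsometry.averaged_eq_self (Submodule.starProjection_apply_mem _ _)
  have hfix : douglasRachford pA pB (z + w) = z + w := by rw [hT', add_sub_cancel_left, hw]
  have horth : x 0 - (z + w) ∈ Q.fixedSubspaceᗮ := by
    simpa only [sub_sub] using Submodule.sub_starProjection_mem_orthogonal (x 0 - z)
  refine ⟨z + w, hfix, ⟨c, hc₀, hc₁, ‖x 0 - (z + w)‖ + 1, by positivity, fun k => ?_⟩, ?_⟩
  · rw [sub_eq_iterate_of_eq_vadd hT' hw hx k]
    calc _ ≤ c ^ k * ‖x 0 - (z + w)‖ := hcontract _ horth k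
      _ ≤ (‖x 0 - (z + w)‖ + 1) * c ^ k := by nlinarith [pow_nonneg hc₀ k]
  · exact ⟨apply_eq_of_douglasRachford_eq_self hfix ▸ (hpA _).1, (hpB _).1⟩
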